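/- arXiv:cs/0611052 — 7 statements merged into one kernel-verified Lean document; each statement's English description precedes it below -/
import Mathlib

section
/- Fix a CNF formula F and a satisfying assignment σ. Define a coarsening step on strings in {0,1,*}^n: a variable x_i is free in a string x if in every clause containing x_i or its negation, some other literal is assigned true or *; a coarsening step assigns * to one free variable. Then the fixed point reached from σ by repeatedly applying coarsening steps is unique (independent of the order of steps). -/
/-- A literal over `n` variables: a variable index and a sign
(`pos = true` means the positive literal `x_i`). -/
structure Lit (n : ℕ) where
  var : Fin n
  pos : Bool

/-- A clause is a list of literals. -/
abbrev Clause (n : ℕ) := List (Lit n)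

/-- A CNF formula is a list of clauses. -/
abbrev CNF (n : ℕ) := List (Clause n)

/-- A Boolean assignment `σ` satisfies the formula `F`. -/
def Satisfies {n : ℕ} (σ : Fin n → Bool) (F : CNF n) : Prop :=
  ∀ c ∈ F, ∃ l ∈ c, σ l.var = l.pos

/-- Under a partial assignment `x : Fin n → Option Bool` (where `none` denotes `*`),
the literal `l` is assigned true or `*`. -/
def LitOk {n : ℕ} (x : Fin n → Option Bool) (l : Lit n) : Prop :=
  x l.var = none ∨ x l.var = some l.pos

/-- Variable `i` is free in `x` (w.r.t. formula `F`): in every clause containing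
`x_i` or its negation, at least one of the other literals is assigned true or `*`. -/
def Free {n : ℕ} (F : CNF n) (x : Fin n → Option Bool) (i : Fin n) : Prop :=
  ∀ c ∈ F, (∃ l ∈ c, l.var = i) → ∃ l ∈ c, l.var ≠ i ∧ LitOk x l

/-- A coarsening step: assign `*` to one free variable currently holding a 0/1 value. -/
def Step {n : ℕ} (F : CNF n) (x y : Fin n → Option Bool) : Prop :=
  ∃ i, Free F x i ∧ x i ≠ none ∧ y = Function.update x i none

/-- `y` is reachable from `x` by a sequence of coarsening steps. -/
def Reaches {n : ℕ} (F : CNF n) : (Fin n → Option Bool) → (Fin n → Option Bool) → Prop :=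
  Relation.ReflTransGen (Step F)

/-- `x` is a fixed point of coarsening: no coarsening step applies. -/
def IsFixedPoint {n : ℕ} (F : CNF n) (x : Fin n → Option Bool) : Prop :=
  ∀ y, ¬ Step F x y

/-- View a total Boolean assignment as a partial assignment. -/
def toPartial {n : ℕ} (σ : Fin n → Bool) : Fin n → Option Bool :=
  fun i => some (σ i)

/-- Two satisfying assignments are in the same cluster: connected by a path of
satisfying assignments with consecutive Hamming distance 1. -/
def SameCluster {n : ℕ} (F : CNF n) : (Fin n → Bool) → (Fin n → Bool) → Prop :=
  Relation.ReflTransGen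
    (fun σ τ => Satisfies σ F ∧ Satisfies τ F ∧ hammingDist σ τ = 1)

lemma Free.mono {n : ℕ} {F : CNF n} {x : Fin n → Option Bool} {i j : Fin n}
    (h : Free F x i) : Free F (Function.update x j none) i := by
  intro c hc hmem
  obtain ⟨l, hl, hne, hok⟩ := h c hc hmem
  refine ⟨l, hl, hne, ?_⟩
  by_cases hv : l.var = j
  · left; simp [Function.update, hv]
  · unfold LitOk at *
    rwa [Function.update_of_ne hv]

lemma step_diamond {n : ℕ} {F : CNF n} {a b c : Fin n → Option Bool}
    (hab : Step F a b) (hac : Step F a c) :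
    ∃ d, Relation.ReflGen (Step F) b d ∧ Relation.ReflTransGen (Step F) c d := by
  obtain ⟨i, hfi, hi, rfl⟩ := hab
  obtain ⟨j, hfj, hj, rfl⟩ := hac
  by_cases hij : i = j
  · subst hij; exact ⟨_, Relation.ReflGen.refl, Relation.ReflTransGen.refl⟩
  · refine ⟨Function.update (Function.update a i none) j none,
      Relation.ReflGen.single ⟨j, hfj.mono, ?_, rfl⟩,
      Relation.ReflTransGen.single ⟨i, hfi.mono, ?_, ?_⟩⟩
    · rwa [Function.update_of_ne (Ne.symm hij)]
    · rwa [Function.update_of_ne hij]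
    · rw [Function.update_comm hij]

/-- The coarsening fixed point reached from a satisfying assignment is unique
(independent of the order of coarsening steps). -/
theorem coarsening_fixed_point_unique {n : ℕ} (F : CNF n) (σ : Fin n → Bool)
    (hσ : Satisfies σ F) (w₁ w₂ : Fin n → Option Bool)
    (h₁ : Reaches F (toPartial σ) w₁) (hfp₁ : IsFixedPoint F w₁)
    (h₂ : Reaches F (toPartial σ) w₂) (hfp₂ : IsFixedPoint F w₂) :
    w₁ = w₂ := by
  obtain ⟨d, hd₁, hd₂⟩ :=
    Relation.church_rosser (fun a b c hab hac => step_diamond hab hac) h₁ h₂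
  have e₁ : w₁ = d := by
    rcases (hd₁.cases_head) with h | ⟨u, hu, _⟩
    · exact h
    · exact absurd hu (hfp₁ u)
  have e₂ : w₂ = d := by
    rcases (hd₂.cases_head) with h | ⟨u, hu, _⟩
    · exact h
    · exact absurd hu (hfp₂ u)
  rw [e₁, e₂]
end

section
/- Every core of a cluster is a cover: if w ∈ {0,1,*}^n is the coarsening fixed point of a satisfying assignment σ of a CNF formula F, then (i) under w every clause of F contains a satisfied literal or at least two * variables, and (ii) every free variable in w is assigned *. -/
/-- Every core is a cover: if `w` is the coarsening fixed point of a satisfying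
assignment `σ`, then (i) under `w` every clause contains a satisfied literal or at
least two `*` variables, and (ii) every free variable in `w` is assigned `*`. -/
theorem core_is_cover {n : ℕ} (F : CNF n) (σ : Fin n → Bool)
    (hσ : Satisfies σ F) (w : Fin n → Option Bool)
    (hreach : Reaches F (toPartial σ) w) (hfp : IsFixedPoint F w) :
    (∀ c ∈ F, (∃ l ∈ c, w l.var = some l.pos) ∨
        ∃ l₁ ∈ c, ∃ l₂ ∈ c, l₁.var ≠ l₂.var ∧ w l₁.var = none ∧ w l₂.var = none) ∧
      ∀ i : Fin n, Free F w i → w i = none := by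
  have key : ∀ c ∈ F, (∃ l ∈ c, LitOk w l) ∧
      (∀ i, w i = none → (∃ l ∈ c, l.var = i) → ∃ l ∈ c, l.var ≠ i ∧ LitOk w l) := by
    clear hfp
    induction hreach with
    | refl =>
      intro c hc
      refine ⟨?_, ?_⟩
      · obtain ⟨l, hl, hsat⟩ := hσ c hc
        exact ⟨l, hl, Or.inr (congrArg some hsat)⟩
      · intro i hi _
        simp [toPartial] at hi
    | @tail x y hxy hstep ih =>
      obtain ⟨j, hfree, -, rfl⟩ := hstep
      have mono : ∀ l : Lit n, LitOk x l → LitOk (Function.update x j none) l := by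
        intro l hl
        by_cases h : l.var = j
        · left; simp [Function.update, h]
        · unfold LitOk at *
          rwa [Function.update_of_ne h]
      intro c hc
      obtain ⟨h1, h2⟩ := ih c hc
      refine ⟨?_, ?_⟩
      · obtain ⟨l, hl, hok⟩ := h1
        exact ⟨l, hl, mono l hok⟩
      · intro i hi hmem
        by_cases hij : i = j
        · subst hij
          obtain ⟨l, hl, hlv, hok⟩ := hfree c hc hmem
          exact ⟨l, hl, hlv, mono l hok⟩
        · have hx : x i = none := by rwa [Function.update_of_ne hij] at hi
          obtain ⟨l, hl, hlv, hok⟩ := h2 i hx hmem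
          exact ⟨l, hl, hlv, mono l hok⟩
  constructor
  · intro c hc
    obtain ⟨h1, h2⟩ := key c hc
    by_cases hsat : ∃ l ∈ c, w l.var = some l.pos
    · exact Or.inl hsat
    · push_neg at hsat
      obtain ⟨l, hl, hok⟩ := h1
      have hln : w l.var = none := hok.resolve_right (hsat l hl)
      obtain ⟨l', hl', hlv, hok'⟩ := h2 l.var hln ⟨l, hl, rfl⟩
      have hln' : w l'.var = none := hok'.resolve_right (hsat l' hl')
      exact Or.inr ⟨l', hl', l, hl, hlv, hln', hln⟩
  · intro i hfree
    by_contra hne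
    exact hfp (Function.update w i none) ⟨i, hfree, hne, rfl⟩
end

section
/- For a random k-CNF formula with n variables and m = rn clauses chosen uniformly and independently, the expected number of ordered pairs of satisfying assignments at Hamming distance z = αn is at most Λ(α,k,r)^n, where Λ(α,k,r) = 2(1 - 2^{1-k} + 2^{-k}(1-α)^k)^r / (α^α (1-α)^{1-α}). -/
open Real

/-- `Λ(α,k,r) = 2 (1 - 2^{1-k} + 2^{-k}(1-α)^k)^r / (α^α (1-α)^{1-α})`. -/
noncomputable def Lam (α : ℝ) (k : ℕ) (r : ℝ) : ℝ :=
  2 * (1 - 2 ^ (1 - (k : ℝ)) + 2 ^ (-(k : ℝ)) * (1 - α) ^ k) ^ r /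
    (α ^ α * (1 - α) ^ (1 - α))

/-- A `k`-clause over `n` variables: an injective tuple of `k` variables together
with signs for each. -/
abbrev ClauseT (n k : ℕ) :=
  {p : (Fin k → Fin n) × (Fin k → Bool) // Function.Injective p.1}

/-- A random formula is a tuple of `m` clauses; `SatF σ F` means `σ` satisfies
every clause of `F`. -/
def SatF {n k m : ℕ} (σ : Fin n → Bool) (F : Fin m → ClauseT n k) : Prop :=
  ∀ j : Fin m, ∃ i : Fin k, σ ((F j).1.1 i) = (F j).1.2 i

instance {n k m : ℕ} (σ : Fin n → Bool) (F : Fin m → ClauseT n k) :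
    Decidable (SatF σ F) := by unfold SatF; infer_instance

/-- The number of ordered pairs of satisfying assignments of `F` at Hamming
distance `z`. -/
def pairCount {n k m : ℕ} (F : Fin m → ClauseT n k) (z : ℕ) : ℕ :=
  (Finset.univ.filter
    (fun p : (Fin n → Bool) × (Fin n → Bool) =>
      SatF p.1 F ∧ SatF p.2 F ∧ hammingDist p.1 p.2 = z)).card

/-!
Averaging over the formula, the `m` clauses are independent, so a pair `(σ, τ)` contributes
`(G / N)^m`, where `N` is the number of clauses and `G` the number of clauses satisfied by
both `σ` and `τ`. A clause is falsified by `σ` iff it uses its variables with the signs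
opposite to `σ`, so `n^{(k)}` clauses are falsified by `σ`, and those falsified by both
assignments are the `(n - z)^{(k)}` clauses whose variables all lie where `σ` and `τ` agree.
Inclusion–exclusion and `(n - z)^{(k)} ≤ (1 - α)^k n^{(k)}` give
`G / N ≤ 1 - 2^{1-k} + 2^{-k} (1 - α)^k`. There are `2^n C(n, z)` pairs at distance `z`, and
`C(n, z) α^z (1 - α)^{n-z} ≤ 1` (one term of the binomial expansion of `(α + (1 - α))^n`)
turns this count into the entropy factor of `Λ`.
-/

open Finset

section HammingCount

variable {ι : Type*} [Fintype ι] [DecidableEq ι]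

lemma card_hammingDist_eq (σ : ι → Bool) (z : ℕ) :
    #{τ | hammingDist σ τ = z} = (Fintype.card ι).choose z := by
  rw [← card_univ, ← card_powersetCard]
  refine card_nbij' (fun τ => univ.filter fun i => σ i ≠ τ i)
    (fun S i => if i ∈ S then !σ i else σ i) ?_ ?_ ?_ ?_
  · intro τ hτ
    simpa [hammingDist] using hτ
  · intro S hS
    have hS : S.card = z := by simpa using hS
    simp only [coe_filter, mem_univ, true_and, hammingDist, ← hS]
    congr 1
    ext i
    by_cases h : i ∈ S <;> simp [h]
  · intro τ _
    funext i
    by_cases h : σ i = τ i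
    · simp [h]
    · simp [Bool.eq_not_iff.mpr h]
  · intro S _
    ext i
    by_cases h : i ∈ S <;> simp [h]

lemma card_pairs_hammingDist_eq (z : ℕ) :
    #{p : (ι → Bool) × (ι → Bool) | hammingDist p.1 p.2 = z} =
      2 ^ Fintype.card ι * (Fintype.card ι).choose z := by
  rw [card_filter, Fintype.sum_prod_type]
  simp only [← card_filter, card_hammingDist_eq, sum_const, card_univ, Fintype.card_fun,
    Fintype.card_bool, smul_eq_mul]

end HammingCount

section ClauseCount

variable {n k : ℕ}

def ClauseSat (σ : Fin n → Bool) (c : ClauseT n k) : Prop :=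
  ∃ i, σ (c.1.1 i) = c.1.2 i

instance (σ : Fin n → Bool) : DecidablePred (ClauseSat (k := k) σ) := by
  unfold ClauseSat; infer_instance

lemma card_clauseT : Fintype.card (ClauseT n k) = n.descFactorial k * 2 ^ k := by
  let e : ClauseT n k ≃ {f : Fin k → Fin n // Function.Injective f} × (Fin k → Bool) :=
    { toFun := fun c => (⟨c.1.1, c.2⟩, c.1.2)
      invFun := fun p => ⟨(p.1.1, p.2), p.1.2⟩ }
  rw [Fintype.card_congr e, Fintype.card_prod,
    Fintype.card_congr (Equiv.subtypeInjectiveEquivEmbedding _ _), Fintype.card_embedding_eq]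
  simp

/-- A clause falsified by `σ` and `τ` carries the signs `!σ` on variables where `σ` and `τ`
agree, so it is determined by its injective tuple of such variables. -/
def falsifiedBothEquiv (σ τ : Fin n → Bool) :
    {c : ClauseT n k // ¬ClauseSat σ c ∧ ¬ClauseSat τ c} ≃
      (Fin k ↪ {x // σ x = τ x}) where
  toFun c :=
    ⟨fun i => ⟨c.1.1.1 i, by
        have hσ := Bool.eq_not_iff.mpr (not_exists.mp c.2.1 i)
        have hτ := Bool.eq_not_iff.mpr (not_exists.mp c.2.2 i)
        rw [hσ, hτ]⟩,
      fun _ _ h => c.1.2 (congrArg Subtype.val h)⟩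
  invFun e :=
    ⟨⟨(fun i => (e i).1, fun i => !σ (e i).1), fun _ _ h => e.injective (Subtype.ext h)⟩, by
      simp only [ClauseSat, not_exists]
      exact ⟨fun i => by simp, fun i => by simp [(e i).2]⟩⟩
  left_inv c := by
    ext i
    · rfl
    · exact Bool.not_eq.mpr (not_exists.mp c.2.1 i)
  right_inv e := rfl

lemma card_agree_eq_sub_hammingDist (σ τ : Fin n → Bool) :
    Fintype.card {x // σ x = τ x} = n - hammingDist σ τ := by
  have hsplit := card_filter_add_card_filter_not (s := (univ : Finset (Fin n)))
    (fun x => σ x = τ x)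
  rw [card_univ, Fintype.card_fin] at hsplit
  rw [Fintype.card_subtype, hammingDist]
  simp only [ne_eq]
  omega

lemma card_falsified_both (σ τ : Fin n → Bool) :
    #{c : ClauseT n k | ¬ClauseSat σ c ∧ ¬ClauseSat τ c} =
      (n - hammingDist σ τ).descFactorial k := by
  rw [← Fintype.card_subtype, Fintype.card_congr (falsifiedBothEquiv σ τ),
    Fintype.card_embedding_eq, card_agree_eq_sub_hammingDist, Fintype.card_fin]

lemma card_falsified (σ : Fin n → Bool) :
    #{c : ClauseT n k | ¬ClauseSat σ c} = n.descFactorial k := by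
  simpa using card_falsified_both (k := k) σ σ

lemma card_clauseSat_both_add (σ τ : Fin n → Bool) :
    #{c : ClauseT n k | ClauseSat σ c ∧ ClauseSat τ c} + 2 * n.descFactorial k =
      Fintype.card (ClauseT n k) + (n - hammingDist σ τ).descFactorial k := by
  have hcompl := card_filter_add_card_filter_not
    (fun c : ClauseT n k => ClauseSat σ c ∧ ClauseSat τ c) (s := univ)
  have hincl := card_union_add_card_inter
    (univ.filter fun c : ClauseT n k => ¬ClauseSat σ c)
    (univ.filter fun c : ClauseT n k => ¬ClauseSat τ c)
  rw [← filter_or, ← filter_and, card_falsified_both, card_falsified, card_falsified] at hincl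
  simp only [not_and_or] at hcompl
  rw [card_univ] at hcompl
  omega

lemma card_satF_both {m : ℕ} (σ τ : Fin n → Bool) :
    #{F : Fin m → ClauseT n k | SatF σ F ∧ SatF τ F} =
      #{c : ClauseT n k | ClauseSat σ c ∧ ClauseSat τ c} ^ m := by
  rw [← Fintype.card_piFinset_const]
  congr 1
  ext F
  simp only [mem_filter, Fintype.mem_piFinset, mem_univ, true_and]
  exact forall_and.symm

lemma sum_pairCount_eq (m z : ℕ) :
    ∑ F : Fin m → ClauseT n k, pairCount F z =
      ∑ p ∈ {p : (Fin n → Bool) × (Fin n → Bool) | hammingDist p.1 p.2 = z},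
        #{c : ClauseT n k | ClauseSat p.1 c ∧ ClauseSat p.2 c} ^ m := by
  simp only [pairCount, card_filter]
  rw [sum_comm, sum_filter]
  refine sum_congr rfl fun p _ => ?_
  split_ifs with h
  · simp only [h, and_true, ← card_filter, card_satF_both]
  · simp [h]

end ClauseCount

lemma descFactorial_mul_pow_le {a n : ℕ} (k : ℕ) (h : a ≤ n) :
    a.descFactorial k * n ^ k ≤ a ^ k * n.descFactorial k := by
  induction k with
  | zero => simp
  | succ k ih =>
    have hstep : (a - k) * n ≤ a * (n - k) := by
      rw [Nat.sub_mul, Nat.mul_sub]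
      exact Nat.sub_le_sub_left (by rw [mul_comm]; exact Nat.mul_le_mul_left _ h) _
    calc a.descFactorial (k + 1) * n ^ (k + 1)
        = (a - k) * n * (a.descFactorial k * n ^ k) := by rw [Nat.descFactorial_succ]; ring
      _ ≤ a * (n - k) * (a ^ k * n.descFactorial k) := Nat.mul_le_mul hstep ih
      _ = a ^ (k + 1) * n.descFactorial (k + 1) := by rw [Nat.descFactorial_succ]; ring

lemma descFactorial_le_div_pow_mul {a n : ℕ} (k : ℕ) (h : a ≤ n) (hn : 0 < n) :
    (a.descFactorial k : ℝ) ≤ ((a : ℝ) / n) ^ k * n.descFactorial k := by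
  rw [div_pow, div_mul_eq_mul_div, le_div_iff₀ (by positivity)]
  exact_mod_cast descFactorial_mul_pow_le k h

lemma choose_mul_pow_mul_pow_le_one {n z : ℕ} {x : ℝ} (hzn : z ≤ n) (h0 : 0 ≤ x)
    (h1 : x ≤ 1) :
    (n.choose z : ℝ) * (x ^ z * (1 - x) ^ (n - z)) ≤ 1 := by
  have h1' : 0 ≤ 1 - x := by linarith
  calc (n.choose z : ℝ) * (x ^ z * (1 - x) ^ (n - z))
      = x ^ z * (1 - x) ^ (n - z) * n.choose z := by ring
    _ ≤ ∑ i ∈ range (n + 1), x ^ i * (1 - x) ^ (n - i) * n.choose i :=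
        single_le_sum (f := fun i => x ^ i * (1 - x) ^ (n - i) * (n.choose i : ℝ))
          (fun i _ => by positivity) (by simp; omega)
    _ = 1 := by rw [← add_pow]; norm_num

/-- The probability that a clause with independent uniform literals is satisfied by two
assignments at relative Hamming distance `α`; `Lam α k r = 2 * probSatBoth α k ^ r / _`. -/
noncomputable def probSatBoth (α : ℝ) (k : ℕ) : ℝ :=
  1 - 2 ^ (1 - (k : ℝ)) + 2 ^ (-(k : ℝ)) * (1 - α) ^ k

lemma probSatBoth_eq (α : ℝ) (k : ℕ) :
    probSatBoth α k = (2 ^ k - 2 + (1 - α) ^ k) / 2 ^ k := by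
  rw [probSatBoth, Real.rpow_sub two_pos, Real.rpow_neg two_pos.le, Real.rpow_natCast,
    Real.rpow_one]
  field_simp

lemma probSatBoth_nonneg {α : ℝ} (k : ℕ) (h1 : α ≤ 1) : 0 ≤ probSatBoth α k := by
  rw [probSatBoth_eq]
  rcases k.eq_zero_or_pos with rfl | hk
  · norm_num
  · have : (2 : ℝ) ≤ 2 ^ k := le_self_pow₀ one_le_two hk.ne'
    have : 0 ≤ (1 - α) ^ k := pow_nonneg (by linarith) k
    positivity

lemma card_clauseSat_both_le {n k : ℕ} (hn : 0 < n) (σ τ : Fin n → Bool) :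
    (#{c : ClauseT n k | ClauseSat σ c ∧ ClauseSat τ c} : ℝ) ≤
      probSatBoth (hammingDist σ τ / n) k * Fintype.card (ClauseT n k) := by
  have hd := hammingDist_le_card_fintype (x := σ) (y := τ)
  rw [Fintype.card_fin] at hd
  have hcount : (#{c : ClauseT n k | ClauseSat σ c ∧ ClauseSat τ c} : ℝ) +
      2 * n.descFactorial k =
        Fintype.card (ClauseT n k) + (n - hammingDist σ τ).descFactorial k := by
    exact_mod_cast card_clauseSat_both_add σ τ
  have hratio : 1 - (hammingDist σ τ : ℝ) / n = ((n - hammingDist σ τ : ℕ) : ℝ) / n := by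
    rw [Nat.cast_sub hd]; field_simp
  have hfalse := descFactorial_le_div_pow_mul k (Nat.sub_le n (hammingDist σ τ)) hn
  have hqN : probSatBoth (hammingDist σ τ / n) k * Fintype.card (ClauseT n k) =
      Fintype.card (ClauseT n k) - 2 * n.descFactorial k +
        (1 - (hammingDist σ τ : ℝ) / n) ^ k * n.descFactorial k := by
    rw [probSatBoth_eq, card_clauseT]
    push_cast
    field_simp
  rw [hqN, hratio]
  linarith

lemma rpow_self_pos {x : ℝ} (hx : 0 ≤ x) : 0 < x ^ x := by
  rcases hx.eq_or_lt with rfl | hx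
  · simp
  · exact Real.rpow_pos_of_pos hx x

lemma rpow_self_pow {x : ℝ} {n a : ℕ} (hx : 0 ≤ x) (h : x * n = a) : (x ^ x) ^ n = x ^ a := by
  rw [← Real.rpow_natCast (x ^ x), ← Real.rpow_mul hx, h, Real.rpow_natCast]

lemma two_pow_mul_choose_mul_le_Lam_pow {n z : ℕ} (k m : ℕ) (hzn : z ≤ n) (hn : 0 < n) :
    2 ^ n * (n.choose z : ℝ) * probSatBoth ((z : ℝ) / n) k ^ m ≤
      Lam ((z : ℝ) / n) k ((m : ℝ) / n) ^ n := by
  set α : ℝ := (z : ℝ) / n with hα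
  have hn' : (0 : ℝ) < n := by exact_mod_cast hn
  have hα0 : 0 ≤ α := by positivity
  have hα1 : α ≤ 1 := div_le_one_of_le₀ (by exact_mod_cast hzn) hn'.le
  have hq := probSatBoth_nonneg k hα1
  have hentropy : (α ^ α * (1 - α) ^ (1 - α)) ^ n = α ^ z * (1 - α) ^ (n - z) := by
    rw [mul_pow, rpow_self_pow (n := n) (a := z) hα0 (by rw [hα]; field_simp),
      rpow_self_pow (n := n) (a := n - z) (sub_nonneg.mpr hα1)
        (by rw [hα, Nat.cast_sub hzn]; field_simp)]
  have hLam : Lam α k ((m : ℝ) / n) ^ n =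
      2 ^ n * probSatBoth α k ^ m / (α ^ z * (1 - α) ^ (n - z)) := by
    rw [show Lam α k ((m : ℝ) / n) = 2 * probSatBoth α k ^ ((m : ℝ) / n) /
        (α ^ α * (1 - α) ^ (1 - α)) from rfl, div_pow, mul_pow, hentropy,
      ← Real.rpow_natCast (_ ^ _), ← Real.rpow_mul hq, div_mul_cancel₀ _ hn'.ne',
      Real.rpow_natCast]
  have hD : 0 < α ^ z * (1 - α) ^ (n - z) := by
    rw [← hentropy]
    exact pow_pos (mul_pos (rpow_self_pos hα0) (rpow_self_pos (sub_nonneg.mpr hα1))) n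
  rw [hLam, le_div_iff₀ hD]
  calc 2 ^ n * (n.choose z : ℝ) * probSatBoth α k ^ m * (α ^ z * (1 - α) ^ (n - z))
      = 2 ^ n * probSatBoth α k ^ m * (n.choose z * (α ^ z * (1 - α) ^ (n - z))) := by ring
    _ ≤ 2 ^ n * probSatBoth α k ^ m :=
        mul_le_of_le_one_right (by positivity) (choose_mul_pow_mul_pow_le_one hzn hα0 hα1)

lemma sum_pairCount_le {n k : ℕ} (m z : ℕ) (hn : 0 < n) :
    ∑ F : Fin m → ClauseT n k, (pairCount F z : ℝ) ≤
      2 ^ n * (n.choose z : ℝ) * probSatBoth ((z : ℝ) / n) k ^ m *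
        (Fintype.card (ClauseT n k) : ℝ) ^ m := by
  set q := probSatBoth ((z : ℝ) / n) k
  set N := Fintype.card (ClauseT n k)
  calc ∑ F : Fin m → ClauseT n k, (pairCount F z : ℝ)
      = ∑ p ∈ {p : (Fin n → Bool) × (Fin n → Bool) | hammingDist p.1 p.2 = z},
          (#{c : ClauseT n k | ClauseSat p.1 c ∧ ClauseSat p.2 c} : ℝ) ^ m := by
        exact_mod_cast sum_pairCount_eq m z
    _ ≤ ∑ p ∈ {p : (Fin n → Bool) × (Fin n → Bool) | hammingDist p.1 p.2 = z},
          (q * N) ^ m := by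
        refine sum_le_sum fun p hp => pow_le_pow_left₀ (Nat.cast_nonneg _) ?_ m
        have hd : hammingDist p.1 p.2 = z := (mem_filter.mp hp).2
        simpa only [hd] using card_clauseSat_both_le (k := k) hn p.1 p.2
    _ = 2 ^ n * (n.choose z : ℝ) * q ^ m * N ^ m := by
        rw [sum_const, card_pairs_hammingDist_eq, Fintype.card_fin, nsmul_eq_mul]
        push_cast
        ring

theorem expected_pairs_le_general (n k m z : ℕ) (hzn : z < n) :
    (∑ F : Fin m → ClauseT n k, (pairCount F z : ℝ)) /
        (Fintype.card (Fin m → ClauseT n k) : ℝ) ≤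
      Lam ((z : ℝ) / n) k ((m : ℝ) / n) ^ n := by
  have hn : 0 < n := z.zero_le.trans_lt hzn
  have hq : 0 ≤ probSatBoth ((z : ℝ) / n) k :=
    probSatBoth_nonneg k (div_le_one_of_le₀ (by exact_mod_cast hzn.le) n.cast_nonneg)
  have hbound := two_pow_mul_choose_mul_le_Lam_pow k m hzn.le hn
  rw [Fintype.card_fun, Fintype.card_fin, Nat.cast_pow]
  refine div_le_of_le_mul₀ (by positivity) (le_trans (by positivity) hbound) ?_
  exact (sum_pairCount_le m z hn).trans (by gcongr)

/-- First moment bound: for a random `k`-CNF formula with `n` variables and `m`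
clauses chosen uniformly and independently, the expected number of ordered pairs
of satisfying assignments at Hamming distance `z` is at most `Λ(z/n, k, m/n)^n`. -/
theorem expected_pairs_le (n k m z : ℕ) (hn : 0 < n) (hk : 1 ≤ k) (hkn : k ≤ n)
    (hz0 : 0 < z) (hzn : z < n) :
    (∑ F : Fin m → ClauseT n k, (pairCount F z : ℝ)) /
        (Fintype.card (Fin m → ClauseT n k) : ℝ) ≤
      Lam ((z : ℝ) / n) k ((m : ℝ) / n) ^ n :=
  expected_pairs_le_general n k m z hzn
end

section
/- Let w(α,k,γ) = 2 ln 2 - 2(1/2 - α)^2 - γ ln 2 · (2 - (1-α)^k). Then ln Λ(α, k, γ 2^k ln 2) < w(α,k,γ) for all α ∈ (0,1), k ≥ 2, and γ > 0. -/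
open Real

/-! Taking logarithms, `log Λ(α, k, r) = log 2 + h(α) + r log (1 - s)` with `h` the binary
entropy and `s = (2 - (1-α)^k) / 2^k ∈ (0, 1)`. Then `log (1 - s) < -s`, and the factor `2^k` of
`r = γ 2^k log 2` cancels the denominator of `s`. The entropy bound `h(α) ≤ log 2 - 2(α - 1/2)²`
follows on `[1/2, 1]` by monotonicity from `log ((1+u)/(1-u)) ≥ 2u`, the leading term of the
power series of the left side, and on `[0, 1/2]` by the symmetry `h(1 - α) = h(α)`. -/

namespace Real

lemma two_mul_le_log_one_add_sub_log_one_sub {u : ℝ} (h0 : 0 ≤ u) (h1 : u < 1) :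
    2 * u ≤ log (1 + u) - log (1 - u) := by
  have hs := hasSum_log_sub_log_of_abs_lt_one (abs_lt.2 ⟨by linarith, h1⟩)
  simpa using le_hasSum hs 0 fun n _ => by positivity

lemma binEntropy_le_log_two_sub_sq_of_two_inv_le {p : ℝ} (h0 : 2⁻¹ ≤ p) (h1 : p ≤ 1) :
    binEntropy p ≤ log 2 - 2 * (p - 2⁻¹) ^ 2 := by
  let F : ℝ → ℝ := fun p => log 2 - 2 * (p - 2⁻¹) ^ 2 - binEntropy p
  have hF : ∀ q ∈ interior (Set.Icc 2⁻¹ 1),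
      HasDerivAt F (log q - log (1 - q) - 2 * (2 * q - 1)) q := by
    rw [interior_Icc]
    intro q ⟨hq0, hq1⟩
    have hsq : HasDerivAt (fun q : ℝ => (q - 2⁻¹) ^ 2) (2 * (q - 2⁻¹)) q := by
      simpa using ((hasDerivAt_id' q).sub_const 2⁻¹).fun_pow 2
    refine (((hsq.const_mul 2).const_sub (log 2)).fun_sub
      (hasDerivAt_binEntropy (by positivity) hq1.ne)).congr_deriv ?_
    ring
  have hmono : MonotoneOn F (Set.Icc 2⁻¹ 1) := by
    refine monotoneOn_of_deriv_nonneg (convex_Icc _ _) (by fun_prop)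
      (fun q hq => (hF q hq).differentiableAt.differentiableWithinAt) fun q hq => ?_
    rw [(hF q hq).deriv]
    rw [interior_Icc] at hq
    have := two_mul_le_log_one_add_sub_log_one_sub (u := 2 * q - 1)
      (by linarith [hq.1]) (by linarith [hq.2])
    rw [show 1 + (2 * q - 1) = 2 * q by ring, show 1 - (2 * q - 1) = 2 * (1 - q) by ring,
      log_mul two_ne_zero (by linarith [hq.1]), log_mul two_ne_zero (by linarith [hq.2])] at this
    linarith
  have := hmono (Set.left_mem_Icc.2 (by norm_num)) ⟨h0, h1⟩ h0
  simp only [F, binEntropy_two_inv] at this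
  linarith

lemma binEntropy_le_log_two_sub_sq {p : ℝ} (h0 : 0 ≤ p) (h1 : p ≤ 1) :
    binEntropy p ≤ log 2 - 2 * (p - 2⁻¹) ^ 2 := by
  rcases le_total 2⁻¹ p with hp | hp
  · exact binEntropy_le_log_two_sub_sq_of_two_inv_le hp h1
  · have := binEntropy_le_log_two_sub_sq_of_two_inv_le (p := 1 - p) (by linarith) (by linarith)
    rw [binEntropy_one_sub] at this
    linarith

lemma log_rpow_self_mul_one_sub_rpow_one_sub {p : ℝ} (h0 : 0 < p) (h1 : p < 1) :
    log (p ^ p * (1 - p) ^ (1 - p)) = -binEntropy p := by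
  have h1' : 0 < 1 - p := sub_pos.2 h1
  rw [log_mul (by positivity) (by positivity), log_rpow h0, log_rpow h1', binEntropy,
    log_inv, log_inv]
  ring

end Real

lemma Lam_eq (α : ℝ) (k : ℕ) (r : ℝ) :
    Lam α k r = 2 * (1 - (2 - (1 - α) ^ k) / 2 ^ k) ^ r / (α ^ α * (1 - α) ^ (1 - α)) := by
  have hneg : (2 : ℝ) ^ (-(k : ℝ)) = 1 / 2 ^ k := by
    rw [rpow_neg zero_le_two, rpow_natCast, one_div]
  have hsub : (2 : ℝ) ^ (1 - (k : ℝ)) = 2 / 2 ^ k := by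
    rw [sub_eq_add_neg, rpow_add two_pos, rpow_one, hneg, mul_one_div]
  rw [Lam, hneg, hsub]
  ring_nf

lemma two_sub_pow_div_two_pow_mem_Ioo {a : ℝ} {k : ℕ} (h0 : 0 < a) (h1 : a < 1) (hk : k ≠ 0) :
    (2 - a ^ k) / 2 ^ k ∈ Set.Ioo 0 1 := by
  have hak : a ^ k < 1 := pow_lt_one₀ h0.le h1 hk
  have h2k : (2 : ℝ) ≤ 2 ^ k := by
    simpa using pow_le_pow_right₀ one_le_two (Nat.one_le_iff_ne_zero.2 hk)
  constructor
  · exact div_pos (by linarith) (by positivity)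
  · rw [div_lt_one (by positivity)]
    linarith [pow_pos h0 k]

lemma log_Lam {α : ℝ} (k : ℕ) (r : ℝ) (h0 : 0 < α) (h1 : α < 1) (hk : k ≠ 0) :
    log (Lam α k r) = log 2 + binEntropy α + r * log (1 - (2 - (1 - α) ^ k) / 2 ^ k) := by
  have hs := two_sub_pow_div_two_pow_mem_Ioo (sub_pos.2 h1) (sub_lt_self 1 h0) hk
  have hb : 0 < 1 - (2 - (1 - α) ^ k) / 2 ^ k := sub_pos.2 hs.2
  have h1' : 0 < 1 - α := sub_pos.2 h1
  rw [Lam_eq, log_div (by positivity) (by positivity), log_mul two_ne_zero (by positivity),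
    log_rpow hb, log_rpow_self_mul_one_sub_rpow_one_sub h0 h1]
  ring

/-- With `w(α,k,γ) = 2 ln 2 - 2(1/2-α)² - γ ln 2 (2 - (1-α)^k)`, we have
`ln Λ(α, k, γ 2^k ln 2) < w(α,k,γ)`. -/
theorem log_Lam_lt_w (α γ : ℝ) (k : ℕ) (hα0 : 0 < α) (hα1 : α < 1)
    (hk : 2 ≤ k) (hγ : 0 < γ) :
    Real.log (Lam α k (γ * 2 ^ k * Real.log 2)) <
      2 * Real.log 2 - 2 * (1 / 2 - α) ^ 2 -
        γ * Real.log 2 * (2 - (1 - α) ^ k) := by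
  have hk0 : k ≠ 0 := by omega
  set s := (2 - (1 - α) ^ k) / 2 ^ k with hs_def
  obtain ⟨hs0, hs1⟩ := two_sub_pow_div_two_pow_mem_Ioo (sub_pos.2 hα1) (sub_lt_self 1 hα0) hk0
  have hlog : log (1 - s) < -s := by
    linarith [log_lt_sub_one_of_pos (sub_pos.2 hs1) (by linarith)]
  have hr : 0 < γ * 2 ^ k * log 2 := by positivity
  rw [log_Lam k _ hα0 hα1 hk0]
  calc log 2 + binEntropy α + γ * 2 ^ k * log 2 * log (1 - s)
      < log 2 + (log 2 - 2 * (α - 2⁻¹) ^ 2) + γ * 2 ^ k * log 2 * (-s) :=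
        add_lt_add_of_le_of_lt (by gcongr; exact binEntropy_le_log_two_sub_sq hα0.le hα1.le)
          (mul_lt_mul_of_pos_left hlog hr)
    _ = 2 * log 2 - 2 * (1 / 2 - α) ^ 2 - γ * log 2 * (2 - (1 - α) ^ k) := by
        rw [hs_def]; field_simp; ring
end

section
/- For all integers k ≥ 4 and real γ with 0 < γ < 1, the function k ↦ w(1/k, k, γ) is decreasing, i.e., its derivative with respect to k (treating k as a real variable ≥ 4) is negative. -/
/-!
With `u = 1 - 1/t`, the derivative of `t ↦ (1 - 1/t)^t` is `u^(t-1) (1 - u + u log u)`.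
Since `1 - 1/u < log u ≤ u - 1`, the bracket lies in `(0, (1 - u)^2] = (0, 1/t^2]`, and
`u^(t-1) ≤ 1`, so this derivative lies in `(0, 1/t^2]`. The quadratic part of `w` contributes
`-2(1 - 2/t)/t^2 ≤ -1/t^2` for `t ≥ 4`, which outweighs the rest because `γ log 2 < 1`.
-/

open Real

lemma one_sub_add_mul_log_pos {u : ℝ} (hu : 0 < u) (hu1 : u ≠ 1) : 0 < 1 - u + u * log u := by
  have h := mul_lt_mul_of_pos_left (log_lt_sub_one_of_pos (inv_pos.2 hu) (inv_ne_one.2 hu1)) hu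
  rw [log_inv, mul_sub, mul_inv_cancel₀ hu.ne'] at h
  linarith

lemma one_sub_add_mul_log_le_sq {u : ℝ} (hu : 0 < u) : 1 - u + u * log u ≤ (1 - u) ^ 2 := by
  nlinarith [mul_le_mul_of_nonneg_left (log_le_sub_one_of_pos hu) hu.le]

lemma hasDerivAt_one_sub_inv_rpow_self {t : ℝ} (ht : 1 < t) :
    HasDerivAt (fun s : ℝ => (1 - 1 / s) ^ s)
      ((1 - 1 / t) ^ (t - 1) * (1 / t + (1 - 1 / t) * log (1 - 1 / t))) t := by
  have ht0 : t ≠ 0 := by positivity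
  have hu : 0 < 1 - 1 / t := by
    rw [sub_pos, div_lt_one (by linarith)]; exact ht
  have hbase : HasDerivAt (fun s : ℝ => 1 - 1 / s) (1 / t ^ 2) t := by
    simpa [one_div] using (hasDerivAt_inv ht0).const_sub 1
  convert hbase.rpow (hasDerivAt_id' t) hu using 1
  have hpow : (1 - 1 / t) ^ t = (1 - 1 / t) ^ (t - 1) * (1 - 1 / t) := by
    rw [← rpow_add_one hu.ne', sub_add_cancel]
  rw [hpow]
  field_simp

noncomputable def w (α k γ : ℝ) : ℝ :=
  2 * log 2 - 2 * (1 / 2 - α) ^ 2 - γ * log 2 * (2 - (1 - α) ^ k)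

lemma hasDerivAt_w_one_div_self (γ : ℝ) {t : ℝ} (ht : 1 < t) :
    HasDerivAt (fun s : ℝ => w (1 / s) s γ)
      (γ * log 2 * ((1 - 1 / t) ^ (t - 1) * (1 / t + (1 - 1 / t) * log (1 - 1 / t)))
        - 2 * (1 - 2 / t) / t ^ 2) t := by
  have ht0 : t ≠ 0 := by positivity
  have hinv : HasDerivAt (fun s : ℝ => 1 / s) (-(1 / t ^ 2)) t := by
    simpa only [one_div] using hasDerivAt_inv ht0
  have hsq : HasDerivAt (fun s : ℝ => (1 / 2 - 1 / s) ^ 2) ((1 - 2 / t) / t ^ 2) t :=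
    (((hasDerivAt_const t (1 / 2 : ℝ)).sub hinv).pow 2).congr_deriv
      (by norm_num [Pi.sub_apply]; field_simp)
  exact (((hasDerivAt_const t (2 * log 2)).sub (hsq.const_mul 2)).sub
    (((hasDerivAt_one_sub_inv_rpow_self ht).const_sub 2).const_mul (γ * log 2))).congr_deriv
    (by ring)

theorem deriv_w_one_over_k_neg_general (γ : ℝ) (hγ1 : γ < 1) :
    ∀ t : ℝ, 4 ≤ t →
      deriv
          (fun s : ℝ =>
            2 * Real.log 2 - 2 * (1 / 2 - 1 / s) ^ 2 -
              γ * Real.log 2 * (2 - (1 - 1 / s) ^ s)) t < 0 := by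
  intro t ht
  change deriv (fun s : ℝ => w (1 / s) s γ) t < 0
  rw [(hasDerivAt_w_one_div_self γ (by linarith)).deriv]
  set u := 1 - 1 / t with hu
  have hinv : 1 / t = 1 - u := by ring
  have hu0 : 0 < u := by rw [hu, sub_pos, div_lt_one (by linarith)]; linarith
  have hu1 : u < 1 := by rw [hu, sub_lt_self_iff]; positivity
  have hE0 : 0 < 1 / t + u * log u := hinv ▸ one_sub_add_mul_log_pos hu0 hu1.ne
  have hE1 : 1 / t + u * log u ≤ (1 / t) ^ 2 := hinv ▸ one_sub_add_mul_log_le_sq hu0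
  have hD0 : 0 < u ^ (t - 1) * (1 / t + u * log u) := mul_pos (rpow_pos_of_pos hu0 _) hE0
  have hD1 : u ^ (t - 1) * (1 / t + u * log u) ≤ (1 / t) ^ 2 :=
    (mul_le_of_le_one_left hE0.le (rpow_le_one hu0.le hu1.le (by linarith))).trans hE1
  have hc : γ * log 2 < 1 := by
    nlinarith [log_two_lt_d9, log_pos one_lt_two]
  have hquad : (1 / t) ^ 2 ≤ 2 * (1 - 2 / t) / t ^ 2 := by
    rw [div_pow, one_pow]
    gcongr
    have : 2 / t ≤ 1 / 2 := by rw [div_le_iff₀ (by linarith)]; linarith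
    linarith
  linarith [mul_lt_of_lt_one_left hD0 hc]

/-- For real `k ≥ 4` and `0 < γ < 1`, the function `k ↦ w(1/k, k, γ)` is
decreasing: its derivative with respect to `k` is negative. -/
theorem deriv_w_one_over_k_neg (γ : ℝ) (hγ0 : 0 < γ) (hγ1 : γ < 1) :
    ∀ t : ℝ, 4 ≤ t →
      deriv
          (fun s : ℝ =>
            2 * Real.log 2 - 2 * (1 / 2 - 1 / s) ^ 2 -
              γ * Real.log 2 * (2 - (1 - 1 / s) ^ s)) t < 0 :=
  deriv_w_one_over_k_neg_general γ hγ1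
end

section
/- For real numbers c, k, γ with 1 ≤ c < k/2, 0 < γ, and r = γ 2^k ln 2: ln Λ(c/k, k, r) < ln 2 (1 - 2γ + γ e^{-c}) + (c/k)(ln k + 2 ln 2). -/
open Real

/-- For `1 ≤ c < k/2` and `r = γ 2^k ln 2`:
`ln Λ(c/k, k, r) < ln 2 (1 - 2γ + γ e^{-c}) + (c/k)(ln k + 2 ln 2)`. -/
theorem log_Lam_at_c_over_k (k : ℕ) (c γ : ℝ) (hc : 1 ≤ c) (hck : c < (k : ℝ) / 2)
    (hγ : 0 < γ) :
    Real.log (Lam (c / k) k (γ * 2 ^ k * Real.log 2)) <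
      Real.log 2 * (1 - 2 * γ + γ * Real.exp (-c)) +
        (c / k) * (Real.log k + 2 * Real.log 2) := by
  have hk2 : (2:ℝ) < k := by linarith
  have hk0 : (0:ℝ) < k := by linarith
  have hc0 : (0:ℝ) < c := by linarith
  set α := c / (k:ℝ) with hαdef
  have hα0 : 0 < α := div_pos hc0 hk0
  have hα12 : α < 1/2 := by
    rw [hαdef, div_lt_iff₀ hk0]; linarith
  have h1α : 0 < 1 - α := by linarith
  set r := γ * (2:ℝ) ^ k * Real.log 2 with hrdef
  have hlog2 : 0 < Real.log 2 := Real.log_pos one_lt_two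
  have hr : 0 < r := by positivity
  set B := 1 - (2:ℝ) ^ (1 - (k:ℝ)) + 2 ^ (-(k:ℝ)) * (1 - α) ^ k with hBdef
  have hpow1 : (1 - α) ^ k ≤ 1 := pow_le_one₀ h1α.le (by linarith)
  have hpownn : (0:ℝ) ≤ (1 - α) ^ k := pow_nonneg h1α.le k
  have h2kpos : (0:ℝ) < (2:ℝ) ^ (-(k:ℝ)) := Real.rpow_pos_of_pos two_pos _
  have h2k : (2:ℝ) ^ (1 - (k:ℝ)) ≤ 1/4 := by
    have : (1/4 : ℝ) = (2:ℝ) ^ (-2 : ℝ) := by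
      rw [Real.rpow_neg two_pos.le, show ((2:ℝ))^(2:ℝ) = 4 by
        rw [show (2:ℝ) = ((2:ℕ):ℝ) by norm_num, Real.rpow_natCast]; norm_num]
      norm_num
    rw [this]
    have hkn : 2 < k := by exact_mod_cast hk2
    have hk3 : (3:ℝ) ≤ k := by exact_mod_cast hkn
    exact Real.rpow_le_rpow_of_exponent_le one_le_two (by linarith)
  have hrel : (2:ℝ) ^ (1 - (k:ℝ)) = 2 * (2:ℝ) ^ (-(k:ℝ)) := by
    rw [show (1 - (k:ℝ)) = 1 + (-(k:ℝ)) by ring, Real.rpow_add two_pos, Real.rpow_one]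
  have hBpos : 0 < B := by
    have : (0:ℝ) ≤ 2 ^ (-(k:ℝ)) * (1 - α) ^ k := by positivity
    rw [hBdef]; linarith
  have hB1 : B - 1 = (2:ℝ) ^ (-(k:ℝ)) * ((1 - α) ^ k - 2) := by
    rw [hBdef, hrel]; ring
  have hBlt1 : B < 1 := by nlinarith
  have hlogB : Real.log B < B - 1 := Real.log_lt_sub_one_of_pos hBpos (ne_of_lt hBlt1)
  have h2k1 : (2:ℝ) ^ k * (2:ℝ) ^ (-(k:ℝ)) = 1 := by
    rw [← Real.rpow_natCast 2 k, ← Real.rpow_add two_pos]; simp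
  have hrB : r * (B - 1) = γ * Real.log 2 * ((1 - α) ^ k - 2) := by
    rw [hrdef, hB1]
    linear_combination (γ * Real.log 2 * ((1 - α) ^ k - 2)) * h2k1
  have hαk : α * k = c := div_mul_cancel₀ c (ne_of_gt hk0)
  have hexp : (1 - α) ^ k ≤ Real.exp (-c) := by
    have h1 : 1 - α ≤ Real.exp (-α) := by linarith [Real.add_one_le_exp (-α)]
    calc (1 - α) ^ k ≤ (Real.exp (-α)) ^ k := pow_le_pow_left₀ h1α.le h1 k
      _ = Real.exp (-c) := by
          rw [← Real.exp_nat_mul]; congr 1; push_cast; linarith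
  have hlogα : -Real.log α ≤ Real.log k := by
    rw [hαdef, Real.log_div (ne_of_gt hc0) (ne_of_gt hk0)]
    have := Real.log_nonneg hc
    linarith
  have hchord : -(2 * α) * Real.log 2 ≤ Real.log (1 - α) := by
    have hcc := strictConcaveOn_log_Ioi.concaveOn
    have h := hcc.2 (show (1:ℝ) ∈ Set.Ioi (0:ℝ) from Set.mem_Ioi.mpr one_pos)
      (show (1/2:ℝ) ∈ Set.Ioi (0:ℝ) from Set.mem_Ioi.mpr (by norm_num))
      (show (0:ℝ) ≤ 1 - 2*α by linarith) (show (0:ℝ) ≤ 2*α by linarith)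
      (show (1 - 2*α) + 2*α = 1 by ring)
    rw [smul_eq_mul, smul_eq_mul, smul_eq_mul, smul_eq_mul, Real.log_one] at h
    have h12 : Real.log (1/2) = -Real.log 2 := by
      rw [Real.log_div one_ne_zero two_ne_zero, Real.log_one]; ring
    rw [h12, show (1 - 2*α)*1 + 2*α*(1/2) = 1 - α by ring] at h
    linarith
  have hent : -(α * Real.log α + (1 - α) * Real.log (1 - α)) ≤
      α * (Real.log k + 2 * Real.log 2) := by
    have h1 : α * (-Real.log α) ≤ α * Real.log k :=
      mul_le_mul_of_nonneg_left hlogα hα0.le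
    have hlogneg : Real.log (1 - α) ≤ 0 := Real.log_nonpos (by linarith) (by linarith)
    have h2 : -((1 - α) * Real.log (1 - α)) ≤ 2 * α * Real.log 2 := by
      nlinarith
    nlinarith
  have hBr : (0:ℝ) < B ^ r := Real.rpow_pos_of_pos hBpos r
  have hαα : (0:ℝ) < α ^ α := Real.rpow_pos_of_pos hα0 α
  have h1αα : (0:ℝ) < (1 - α) ^ (1 - α) := Real.rpow_pos_of_pos h1α (1 - α)
  have hlogLam : Real.log (Lam α k r) =
      Real.log 2 + r * Real.log B - (α * Real.log α + (1 - α) * Real.log (1 - α)) := by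
    unfold Lam
    rw [← hBdef, Real.log_div (by positivity) (by positivity),
      Real.log_mul two_ne_zero (ne_of_gt hBr),
      Real.log_mul (ne_of_gt hαα) (ne_of_gt h1αα),
      Real.log_rpow hBpos, Real.log_rpow hα0, Real.log_rpow h1α]
  rw [hlogLam]
  have hrlogB : r * Real.log B < γ * Real.log 2 * (Real.exp (-c) - 2) := by
    have h1 : r * Real.log B < r * (B - 1) := (mul_lt_mul_iff_right₀ hr).mpr hlogB
    rw [hrB] at h1
    have h2 : γ * Real.log 2 * ((1 - α) ^ k - 2) ≤
        γ * Real.log 2 * (Real.exp (-c) - 2) :=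
      mul_le_mul_of_nonneg_left (by linarith) (by positivity)
    linarith
  have hfinal : Real.log 2 * (1 - 2 * γ + γ * Real.exp (-c)) =
      Real.log 2 + γ * Real.log 2 * (Real.exp (-c) - 2) := by ring
  linarith
end

section
/- Fix integer k and reals γ > 3 k^{-1} log_2 k with k ≥ 8. If r = γ 2^k ln 2, there exists α_M with 0 < α_M ≤ 2^{-γk}(1 + 4 γ k^2 2^{-γk} ln 2) such that -ln α_M - 2^{-k} r k (1 - k α_M) = 0. -/
/-!
With `t = γk`, `A = 2^{-t}` and `θ = γk²A ln 2`, the function `û(α) = -ln α - γk ln 2 (1 - kα)`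
takes the value `θ > 0` at `A` and the value `θ(1 + 4θ) - ln(1 + 4θ)` at `A(1 + 4θ)`, which is
`≤ 0` as soon as `θ ≤ 1/4`; the intermediate value theorem then gives the root `α_M`.
The bound `θ ≤ 1/4` follows from `γk²2^{-γk} ≤ 9/64`: the hypothesis on `γ` says `k ≤ 2^{t/3}` and
forces `t > 9`, and `t 2^{-2t/3} ≤ 9/64` for `t ≥ 9`, with equality at `t = 9`.
-/

open Real Set

theorem le_two_rpow_of_nine_le {t : ℝ} (ht : 9 ≤ t) : 64 * t ≤ 9 * 2 ^ (2 * t / 3) := by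
  have hsplit : (2 : ℝ) ^ (2 * t / 3) = 2 ^ (6 : ℝ) * 2 ^ (2 * t / 3 - 6) := by
    rw [← rpow_add two_pos]; ring_nf
  -- `2^s` lies above its tangent line at `s = 0`
  have hexp : 1 + (2 * t / 3 - 6) * log 2 ≤ 2 ^ (2 * t / 3 - 6) := by
    rw [rpow_def_of_pos two_pos]
    linarith [add_one_le_exp (log 2 * (2 * t / 3 - 6))]
  rw [hsplit, show (2 : ℝ) ^ (6 : ℝ) = 64 by norm_num]
  nlinarith [log_two_gt_d9]

theorem mul_mul_two_rpow_neg_le {t x : ℝ} (ht : 9 ≤ t) (hx : x ≤ 2 ^ (t / 3)) :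
    t * x * 2 ^ (-t) ≤ 9 / 64 := by
  have hcancel : (2 : ℝ) ^ (t / 3) * 2 ^ (-t) * 2 ^ (2 * t / 3) = 1 := by
    rw [← rpow_add two_pos, ← rpow_add two_pos]; ring_nf; exact rpow_zero 2
  have hpos : (0 : ℝ) < 2 ^ (2 * t / 3) := by positivity
  rw [← mul_le_mul_iff_left₀ hpos]
  calc t * x * 2 ^ (-t) * 2 ^ (2 * t / 3)
      ≤ t * 2 ^ (t / 3) * 2 ^ (-t) * 2 ^ (2 * t / 3) := by gcongr
    _ = t := by linear_combination t * hcancel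
    _ ≤ 9 / 64 * 2 ^ (2 * t / 3) := by linarith [le_two_rpow_of_nine_le ht]

theorem nine_lt_mul_and_le_two_rpow {x γ : ℝ} (hx : 8 ≤ x) (hγ : 3 * logb 2 x / x < γ) :
    9 < γ * x ∧ x ≤ 2 ^ (γ * x / 3) := by
  have hx₀ : 0 < x := by linarith
  have hlog : 3 * logb 2 x < γ * x := (div_lt_iff₀ hx₀).mp hγ
  have h3 : 3 ≤ logb 2 x := by
    rw [le_logb_iff_rpow_le one_lt_two hx₀]; norm_num; exact hx
  refine ⟨by linarith, ?_⟩
  calc x = 2 ^ logb 2 x := (rpow_logb two_pos (by norm_num) hx₀).symm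
    _ ≤ 2 ^ (γ * x / 3) := rpow_le_rpow_of_exponent_le one_le_two (by linarith)

theorem mul_one_add_four_mul_le_log {θ : ℝ} (h₀ : 0 ≤ θ) (h₁ : θ ≤ 1 / 4) :
    θ * (1 + 4 * θ) ≤ log (1 + 4 * θ) := by
  have hpos : 0 < 1 + 4 * θ := by linarith
  calc θ * (1 + 4 * θ) ≤ 1 - (1 + 4 * θ)⁻¹ := by
        rw [← sub_nonneg]
        have hdiff : 1 - (1 + 4 * θ)⁻¹ - θ * (1 + 4 * θ) =
            θ * (1 - 4 * θ) * (3 + 4 * θ) / (1 + 4 * θ) := by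
          field_simp; ring
        rw [hdiff]
        exact div_nonneg (mul_nonneg (mul_nonneg h₀ (by linarith)) (by linarith)) hpos.le
    _ ≤ log (1 + 4 * θ) := one_sub_inv_le_log_of_pos hpos

theorem exists_neg_log_sub_mul_eq_zero {a b : ℝ} (h₀ : 0 ≤ a * b * exp (-a))
    (h₁ : a * b * exp (-a) ≤ 1 / 4) :
    ∃ α ∈ Icc (exp (-a)) (exp (-a) * (1 + 4 * (a * b * exp (-a)))),
      -log α - a * (1 - b * α) = 0 := by
  set θ := a * b * exp (-a)
  have hA := exp_pos (-a)
  have hAB : exp (-a) ≤ exp (-a) * (1 + 4 * θ) := le_mul_of_one_le_right hA.le (by linarith)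
  have hcont : ContinuousOn (fun α => -log α - a * (1 - b * α))
      (Icc (exp (-a)) (exp (-a) * (1 + 4 * θ))) :=
    ((continuousOn_log.mono fun x hx => (hA.trans_le hx.1).ne').neg).sub (by fun_prop)
  refine intermediate_value_Icc' hAB hcont ⟨?_, ?_⟩
  · simp only [log_mul hA.ne' (by linarith : 1 + 4 * θ ≠ 0), log_exp]
    linear_combination mul_one_add_four_mul_le_log h₀ h₁
  · simp only [log_exp]
    linear_combination h₀

/-- For `k ≥ 8` and `γ > 3 k⁻¹ log₂ k`, with `r = γ 2^k ln 2`, there exists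
`α_M` with `0 < α_M ≤ 2^{-γk}(1 + 4γk² 2^{-γk} ln 2)` such that
`-ln α_M - 2^{-k} r k (1 - k α_M) = 0`. -/
theorem exists_alphaM (k : ℕ) (hk : 8 ≤ k) (γ : ℝ)
    (hγ : 3 * Real.logb 2 k / k < γ) :
    ∃ αM : ℝ, 0 < αM ∧
      αM ≤ (2 : ℝ) ^ (-(γ * k)) *
        (1 + 4 * γ * (k : ℝ) ^ 2 * (2 : ℝ) ^ (-(γ * k)) * Real.log 2) ∧
      -Real.log αM -
        (2 : ℝ) ^ (-(k : ℝ)) * (γ * 2 ^ k * Real.log 2) * k * (1 - k * αM) = 0 := by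
  obtain ⟨h9, hk2⟩ := nine_lt_mul_and_le_two_rpow (x := k) (by exact_mod_cast hk) hγ
  have hγ₀ : 0 < γ := pos_of_mul_pos_left (by linarith) (Nat.cast_nonneg k)
  have hbound := mul_mul_two_rpow_neg_le h9.le hk2
  have hexp : exp (-(γ * k * log 2)) = 2 ^ (-(γ * k)) := by
    rw [rpow_def_of_pos two_pos]; ring_nf
  have hθ : γ * k * log 2 * k * exp (-(γ * k * log 2)) =
      γ * k * k * 2 ^ (-(γ * k)) * log 2 := by
    rw [hexp]; ring
  obtain ⟨α, ⟨hlow, hhigh⟩, hα⟩ :=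
    exists_neg_log_sub_mul_eq_zero (a := γ * k * log 2) (b := k) (by rw [hθ]; positivity)
      (by rw [hθ]; nlinarith [log_two_lt_d9, log_pos one_lt_two])
  refine ⟨α, (exp_pos _).trans_le hlow, ?_, ?_⟩
  · rw [hθ, hexp] at hhigh
    linear_combination hhigh
  · have hcancel : (2 : ℝ) ^ (-(k : ℝ)) * 2 ^ k = 1 := by
      rw [rpow_neg two_pos.le, rpow_natCast, inv_mul_cancel₀ (by positivity)]
    linear_combination hα - γ * k * log 2 * (1 - k * α) * hcancel
end
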